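/- arXiv:1103.6250 — 5 statements merged into one kernel-verified Lean document; each statement's English description precedes it below -/
import Mathlib

section
/- Let (Z, ω) be a 2d-dimensional symplectic vector space, let V ⊆ Z be a subspace with dim V = d, and let W ⊆ Z be a Lagrangian subspace. Then V ∩ W = {0} if and only if V^ω ∩ W = {0}. (This is the pointwise linear-algebraic content of the theorem that, for a Lagrangian submanifold Σ of a symplectic groupoid, the restricted source map is a local diffeomorphism if and only if the restricted target map is: V is the tangent space to the source fiber, V^ω the tangent space to the target fiber, and W the tangent space to Σ.) -/
/-!
A Lagrangian subspace of a `2d`-dimensional space has dimension `d`, so for `dim V = d` the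
condition `V ∩ W = 0` is equivalent to `V + W = Z`. By nondegeneracy this says
`(V + W)^ω = 0`, and `(V + W)^ω = V^ω ∩ W^ω = V^ω ∩ W`.
-/

open Module

/-- The symplectic orthogonal complement of a subspace `U` with respect to a
bilinear form `ω`: all `z` with `ω u z = 0` for every `u ∈ U`. -/
def sympCompl {Z : Type*} [AddCommGroup Z] [Module ℝ Z]
    (ω : Z →ₗ[ℝ] Z →ₗ[ℝ] ℝ) (U : Submodule ℝ Z) : Submodule ℝ Z where
  carrier := {z | ∀ u ∈ U, ω u z = 0}
  add_mem' := by
    intro a b ha hb u hu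
    simp [map_add, ha u hu, hb u hu]
  zero_mem' := by
    intro u hu
    simp
  smul_mem' := by
    intro c a ha u hu
    simp [ha u hu]

theorem Submodule.inf_eq_bot_iff_sup_eq_top_of_finrank_add_eq {K V : Type*} [DivisionRing K]
    [AddCommGroup V] [Module K V] [FiniteDimensional K V] {s t : Submodule K V}
    (h : finrank K s + finrank K t = finrank K V) : s ⊓ t = ⊥ ↔ s ⊔ t = ⊤ := by
  refine ⟨fun hinf ↦ eq_top_of_disjoint s t h.ge (disjoint_iff.mpr hinf), fun hsup ↦ ?_⟩
  have hsum := finrank_sup_add_finrank_inf_eq s t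
  rw [hsup, finrank_top] at hsum
  exact finrank_eq_zero.mp (by omega)

section SympCompl

variable {Z : Type*} [AddCommGroup Z] [Module ℝ Z] (ω : Z →ₗ[ℝ] Z →ₗ[ℝ] ℝ)

theorem sympCompl_eq_orthogonal (U : Submodule ℝ Z) :
    sympCompl ω U = LinearMap.BilinForm.orthogonal ω U :=
  rfl

theorem sympCompl_sup (A B : Submodule ℝ Z) :
    sympCompl ω (A ⊔ B) = sympCompl ω A ⊓ sympCompl ω B := by
  ext z
  refine ⟨fun h ↦ ⟨fun a ha ↦ h a (Submodule.mem_sup_left ha),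
    fun b hb ↦ h b (Submodule.mem_sup_right hb)⟩, ?_⟩
  rintro ⟨hA, hB⟩ u hu
  obtain ⟨a, ha, b, hb, rfl⟩ := Submodule.mem_sup.mp hu
  simp only [map_add, LinearMap.add_apply, hA a ha, hB b hb, add_zero]

variable [FiniteDimensional ℝ Z] {ω}

theorem finrank_sympCompl (hω : ω.SeparatingLeft) (U : Submodule ℝ Z) :
    finrank ℝ (sympCompl ω U) = finrank ℝ Z - finrank ℝ U := by
  have hdim := LinearMap.BilinForm.finrank_add_finrank_orthogonal' (B := ω) U
  rw [LinearMap.separatingLeft_iff_ker_eq_bot.mp hω, inf_bot_eq, finrank_bot, add_zero] at hdim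
  rw [sympCompl_eq_orthogonal]
  omega

theorem sympCompl_eq_bot_iff (hω : ω.SeparatingLeft) (U : Submodule ℝ Z) :
    sympCompl ω U = ⊥ ↔ U = ⊤ := by
  rw [← Submodule.finrank_eq_zero, finrank_sympCompl hω, Submodule.eq_top_iff_finrank_eq]
  have := Submodule.finrank_le U
  omega

theorem two_mul_finrank_of_sympCompl_eq_self (hω : ω.SeparatingLeft) {W : Submodule ℝ Z}
    (hW : sympCompl ω W = W) : 2 * finrank ℝ W = finrank ℝ Z := by
  have hdim := finrank_sympCompl hω W
  rw [hW] at hdim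
  have := Submodule.finrank_le W
  omega

end SympCompl

theorem inf_eq_bot_iff_sympCompl_inf_eq_bot_general
    {Z : Type*} [AddCommGroup Z] [Module ℝ Z] [FiniteDimensional ℝ Z]
    (d : ℕ) (ω : Z →ₗ[ℝ] Z →ₗ[ℝ] ℝ)
    (hnondeg : ∀ z, (∀ z', ω z z' = 0) → z = 0)
    (hdim : finrank ℝ Z = 2 * d)
    (V W : Submodule ℝ Z)
    (hV : finrank ℝ V = d)
    (hW : sympCompl ω W = W) :
    V ⊓ W = ⊥ ↔ sympCompl ω V ⊓ W = ⊥ := by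
  have hWd : 2 * finrank ℝ W = 2 * d := hdim ▸ two_mul_finrank_of_sympCompl_eq_self hnondeg hW
  calc V ⊓ W = ⊥ ↔ V ⊔ W = ⊤ := Submodule.inf_eq_bot_iff_sup_eq_top_of_finrank_add_eq (by omega)
    _ ↔ sympCompl ω (V ⊔ W) = ⊥ := (sympCompl_eq_bot_iff hnondeg _).symm
    _ ↔ sympCompl ω V ⊓ W = ⊥ := by rw [sympCompl_sup, hW]

/-- In a `2d`-dimensional symplectic vector space, if `dim V = d` and `W` is
Lagrangian, then `V ∩ W = 0` iff `V^ω ∩ W = 0`. -/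
theorem inf_eq_bot_iff_sympCompl_inf_eq_bot
    {Z : Type*} [AddCommGroup Z] [Module ℝ Z] [FiniteDimensional ℝ Z]
    (d : ℕ) (ω : Z →ₗ[ℝ] Z →ₗ[ℝ] ℝ)
    (halt : ∀ z, ω z z = 0)
    (hnondeg : ∀ z, (∀ z', ω z z' = 0) → z = 0)
    (hdim : finrank ℝ Z = 2 * d)
    (V W : Submodule ℝ Z)
    (hV : finrank ℝ V = d)
    (hW : sympCompl ω W = W) :
    V ⊓ W = ⊥ ↔ sympCompl ω V ⊓ W = ⊥ :=
  inf_eq_bot_iff_sympCompl_inf_eq_bot_general d ω hnondeg hdim V W hV hW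
end

section
/- Let (Z, ω) be a 2d-dimensional symplectic vector space, let V ⊆ Z be a subspace with dim V = d, and let W ⊆ Z be a Lagrangian subspace. Then dim(V ∩ W) = dim(V^ω ∩ W). (This is the rank version of the previous statement: in the symplectic groupoid setting it says that the restrictions of the source and target maps to a Lagrangian submanifold have tangent maps with kernels of equal dimension, hence one has constant rank if and only if the other does.) -/
open Module

/-! Dimension count: `(V + W)^ω = V^ω ∩ W^ω = V^ω ∩ W`, and for a left-separating form
`dim U^ω = dim Z - dim U`. Hence `dim (V^ω ∩ W) = 2d - dim (V + W) = dim (V ∩ W)`, because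
`dim V = dim W = d`. -/

namespace sympCompl

variable {Z : Type*} [AddCommGroup Z] [Module ℝ Z] (ω : Z →ₗ[ℝ] Z →ₗ[ℝ] ℝ)

theorem sup (U V : Submodule ℝ Z) :
    sympCompl ω (U ⊔ V) = sympCompl ω U ⊓ sympCompl ω V := by
  ext z
  constructor
  · intro h
    exact ⟨fun u hu => h u (Submodule.mem_sup_left hu),
      fun v hv => h v (Submodule.mem_sup_right hv)⟩
  · rintro ⟨hU, hV⟩ _ huv
    obtain ⟨u, hu, v, hv, rfl⟩ := Submodule.mem_sup.1 huv
    simp [hU u hu, hV v hv]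

variable [FiniteDimensional ℝ Z] {ω}

theorem finrank_add_finrank (hω : ω.SeparatingLeft) (U : Submodule ℝ Z) :
    finrank ℝ U + finrank ℝ (sympCompl ω U) = finrank ℝ Z := by
  have h := LinearMap.BilinForm.finrank_add_finrank_orthogonal' (B := ω) U
  rwa [LinearMap.separatingLeft_iff_ker_eq_bot.mp hω, inf_bot_eq, finrank_bot, add_zero] at h

theorem two_mul_finrank_of_eq_self (hω : ω.SeparatingLeft) {W : Submodule ℝ Z}
    (hW : sympCompl ω W = W) : 2 * finrank ℝ W = finrank ℝ Z := by
  have := finrank_add_finrank hω W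
  rw [hW] at this
  omega

end sympCompl

theorem dim_inf_eq_dim_sympCompl_inf_general
    {Z : Type*} [AddCommGroup Z] [Module ℝ Z] [FiniteDimensional ℝ Z]
    (d : ℕ) (ω : Z →ₗ[ℝ] Z →ₗ[ℝ] ℝ)
    (hnondeg : ∀ z, (∀ z', ω z z' = 0) → z = 0)
    (hdim : finrank ℝ Z = 2 * d)
    (V W : Submodule ℝ Z)
    (hV : finrank ℝ V = d)
    (hW : sympCompl ω W = W) :
    finrank ℝ ↥(V ⊓ W) = finrank ℝ ↥(sympCompl ω V ⊓ W) := by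
  have hWd : 2 * finrank ℝ W = finrank ℝ Z := sympCompl.two_mul_finrank_of_eq_self hnondeg hW
  have hsup := sympCompl.finrank_add_finrank hnondeg (V ⊔ W)
  rw [sympCompl.sup, hW] at hsup
  have hsup_inf := Submodule.finrank_sup_add_finrank_inf_eq V W
  omega

/-- In a `2d`-dimensional symplectic vector space, if `dim V = d` and `W` is
Lagrangian, then `dim (V ∩ W) = dim (V^ω ∩ W)`. -/
theorem dim_inf_eq_dim_sympCompl_inf
    {Z : Type*} [AddCommGroup Z] [Module ℝ Z] [FiniteDimensional ℝ Z]
    (d : ℕ) (ω : Z →ₗ[ℝ] Z →ₗ[ℝ] ℝ)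
    (halt : ∀ z, ω z z = 0)
    (hnondeg : ∀ z, (∀ z', ω z z' = 0) → z = 0)
    (hdim : finrank ℝ Z = 2 * d)
    (V W : Submodule ℝ Z)
    (hV : finrank ℝ V = d)
    (hW : sympCompl ω W = W) :
    finrank ℝ ↥(V ⊓ W) = finrank ℝ ↥(sympCompl ω V ⊓ W) :=
  dim_inf_eq_dim_sympCompl_inf_general d ω hnondeg hdim V W hV hW
end

section
/- Let E be a real normed vector space, let L : E × E → ℝ be differentiable, let n ≥ 2, and fix endpoints q₀, qₙ ∈ E. Define the discrete action sum S : E^{n−1} → ℝ by S(q₁, …, q_{n−1}) = Σ_{k=1}^{n} L(q_{k−1}, q_k). Then (q₁, …, q_{n−1}) is a critical point of S (i.e., the Fréchet derivative of S at (q₁, …, q_{n−1}) is zero) if and only if the discrete Euler–Lagrange equations hold: ∂₀L(q_k, q_{k+1}) + ∂₁L(q_{k−1}, q_k) = 0 for every k = 1, …, n−1. -/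
/-- The partial derivative of `L : E × E → ℝ` with respect to the first slot,
as a continuous linear functional: `v ↦ DL(a, b)(v, 0)`. -/
noncomputable def partial0 {E : Type*} [NormedAddCommGroup E] [NormedSpace ℝ E]
    (L : E × E → ℝ) (a b : E) : E →L[ℝ] ℝ :=
  (fderiv ℝ L (a, b)).comp (ContinuousLinearMap.inl ℝ E E)

/-- The partial derivative of `L : E × E → ℝ` with respect to the second slot,
as a continuous linear functional: `v ↦ DL(a, b)(0, v)`. -/
noncomputable def partial1 {E : Type*} [NormedAddCommGroup E] [NormedSpace ℝ E]
    (L : E × E → ℝ) (a b : E) : E →L[ℝ] ℝ :=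
  (fderiv ℝ L (a, b)).comp (ContinuousLinearMap.inr ℝ E E)

/-- The discrete trajectory `q₀, q₁, …, qₙ` with fixed endpoints `q₀ = q0`,
`qₙ = qn` and interior points `x : Fin (n-1) → E` (so `q_k = x (k-1)` for
`0 < k < n`). -/
def discreteTraj {E : Type*} [NormedAddCommGroup E] [NormedSpace ℝ E]
    (n : ℕ) (q0 qn : E) (x : Fin (n - 1) → E) : ℕ → E :=
  fun k => if h : 0 < k ∧ k < n then x ⟨k - 1, by omega⟩
    else if k = 0 then q0 else qn

/-! The action is a sum of `L` composed with the affine maps `y ↦ (q_k, q_{k+1})`, whose linear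
parts are coordinate projections, or zero at the fixed endpoints. By the chain rule, moving only the
interior point `q_{j+1}` changes exactly the two terms of the sum in which it occurs, so the
derivative of the action along that coordinate is `∂₀L(q_{j+1}, q_{j+2}) + ∂₁L(q_j, q_{j+1})`.
A continuous linear map on a finite product vanishes iff it vanishes along every coordinate. -/

open ContinuousLinearMap

theorem ContinuousLinearMap.eq_zero_iff_forall_single {R ι M N : Type*} [Semiring R] [Finite ι]
    [DecidableEq ι] [TopologicalSpace M] [AddCommMonoid M] [Module R M] [TopologicalSpace N]
    [AddCommMonoid N] [Module R N] (φ : (ι → M) →L[R] N) :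
    φ = 0 ↔ ∀ i x, φ (Pi.single i x) = 0 := by
  rw [← coe_inj, LinearMap.pi_ext_iff]
  simp

section DiscreteAction

variable {E : Type*} [NormedAddCommGroup E] [NormedSpace ℝ E]

theorem fderiv_apply_eq_partial0_add_partial1 (L : E × E → ℝ) (a b u w : E) :
    fderiv ℝ L (a, b) (u, w) = partial0 L a b u + partial1 L a b w := by
  simp only [partial0, partial1, comp_apply, inl_apply, inr_apply, ← map_add, Prod.mk_add_mk,
    add_zero, zero_add]

variable (E) in
noncomputable def discreteTrajDeriv (n k : ℕ) : (Fin (n - 1) → E) →L[ℝ] E :=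
  if h : 0 < k ∧ k < n then proj (⟨k - 1, by omega⟩ : Fin (n - 1)) else 0

theorem hasFDerivAt_discreteTraj (n : ℕ) (q0 qn : E) (x : Fin (n - 1) → E) (k : ℕ) :
    HasFDerivAt (fun y => discreteTraj n q0 qn y k) (discreteTrajDeriv E n k) x := by
  by_cases h : 0 < k ∧ k < n
  · simp only [discreteTraj, discreteTrajDeriv, dif_pos h]
    exact hasFDerivAt_apply _ x
  · simp only [discreteTraj, discreteTrajDeriv, dif_neg h]
    exact hasFDerivAt_const _ x

theorem discreteTrajDeriv_single (n k : ℕ) (j : Fin (n - 1)) (v : E) :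
    discreteTrajDeriv E n k (Pi.single j v) = if k = j + 1 then v else 0 := by
  unfold discreteTrajDeriv
  split_ifs with h hk hk
  · rw [proj_apply, Pi.single_apply, if_pos (Fin.ext (by rw [Fin.val_mk]; omega))]
  · rw [proj_apply, Pi.single_apply, if_neg (Fin.ne_of_val_ne (by rw [Fin.val_mk]; omega))]
  · omega
  · rfl

noncomputable def discreteAction (L : E × E → ℝ) (n : ℕ) (q0 qn : E) (y : Fin (n - 1) → E) : ℝ :=
  ∑ k ∈ Finset.range n, L (discreteTraj n q0 qn y k, discreteTraj n q0 qn y (k + 1))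

noncomputable def discreteEL (L : E × E → ℝ) (q : ℕ → E) (k : ℕ) : E →L[ℝ] ℝ :=
  partial0 L (q k) (q (k + 1)) + partial1 L (q (k - 1)) (q k)

variable {L : E × E → ℝ}

theorem hasFDerivAt_discreteAction (hL : Differentiable ℝ L) (n : ℕ) (q0 qn : E)
    (x : Fin (n - 1) → E) :
    HasFDerivAt (discreteAction L n q0 qn)
      (∑ k ∈ Finset.range n,
        (fderiv ℝ L (discreteTraj n q0 qn x k, discreteTraj n q0 qn x (k + 1))).comp
          ((discreteTrajDeriv E n k).prod (discreteTrajDeriv E n (k + 1)))) x :=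
  HasFDerivAt.fun_sum fun k _ => (hL _).hasFDerivAt.comp x
    ((hasFDerivAt_discreteTraj n q0 qn x k).prodMk (hasFDerivAt_discreteTraj n q0 qn x (k + 1)))

theorem fderiv_discreteAction_single (hL : Differentiable ℝ L) (n : ℕ) (q0 qn : E)
    (x : Fin (n - 1) → E) (j : Fin (n - 1)) (v : E) :
    fderiv ℝ (discreteAction L n q0 qn) x (Pi.single j v) =
      discreteEL L (discreteTraj n q0 qn x) (j + 1) v := by
  have hj : (j : ℕ) + 1 < n := by omega
  simp only [(hasFDerivAt_discreteAction hL n q0 qn x).fderiv, sum_apply, comp_apply, prod_apply,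
    discreteTrajDeriv_single, fderiv_apply_eq_partial0_add_partial1, add_left_inj]
  rw [Finset.sum_add_distrib]
  simp only [apply_ite, map_zero, Finset.sum_ite_eq', Finset.mem_range, if_pos hj,
    if_pos (Nat.lt_of_succ_lt hj), discreteEL, add_apply, Nat.add_sub_cancel]

end DiscreteAction

theorem discrete_action_critical_iff_discreteEL_general
    {E : Type*} [NormedAddCommGroup E] [NormedSpace ℝ E]
    (L : E × E → ℝ) (hL : Differentiable ℝ L)
    (n : ℕ) (q0 qn : E) (x : Fin (n - 1) → E) :
    fderiv ℝ
        (fun y : Fin (n - 1) → E =>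
          ∑ k ∈ Finset.range n,
            L (discreteTraj n q0 qn y k, discreteTraj n q0 qn y (k + 1))) x = 0
      ↔ ∀ k : ℕ, 1 ≤ k → k ≤ n - 1 →
          partial0 L (discreteTraj n q0 qn x k) (discreteTraj n q0 qn x (k + 1))
            + partial1 L (discreteTraj n q0 qn x (k - 1)) (discreteTraj n q0 qn x k)
            = 0 := by
  change fderiv ℝ (discreteAction L n q0 qn) x = 0 ↔
    ∀ k, 1 ≤ k → k ≤ n - 1 → discreteEL L (discreteTraj n q0 qn x) k = 0
  simp only [eq_zero_iff_forall_single, fderiv_discreteAction_single hL]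
  constructor
  · intro h k hk1 hk2
    ext v
    simpa [Nat.sub_add_cancel hk1] using h ⟨k - 1, by omega⟩ v
  · intro h j v
    rw [h (j + 1) (by omega) (by omega), zero_apply]

/-- A point `(q₁, …, q_{n−1})` is a critical point of the discrete action sum
`S(q₁, …, q_{n−1}) = Σ_{k=1}^{n} L(q_{k−1}, q_k)` (with endpoints `q₀, qₙ`
fixed) iff the discrete Euler–Lagrange equations
`∂₀L(q_k, q_{k+1}) + ∂₁L(q_{k−1}, q_k) = 0` hold for `k = 1, …, n−1`. -/
theorem discrete_action_critical_iff_discreteEL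
    {E : Type*} [NormedAddCommGroup E] [NormedSpace ℝ E]
    (L : E × E → ℝ) (hL : Differentiable ℝ L)
    (n : ℕ) (hn : 2 ≤ n) (q0 qn : E) (x : Fin (n - 1) → E) :
    fderiv ℝ
        (fun y : Fin (n - 1) → E =>
          ∑ k ∈ Finset.range n,
            L (discreteTraj n q0 qn y k, discreteTraj n q0 qn y (k + 1))) x = 0
      ↔ ∀ k : ℕ, 1 ≤ k → k ≤ n - 1 →
          partial0 L (discreteTraj n q0 qn x k) (discreteTraj n q0 qn x (k + 1))
            + partial1 L (discreteTraj n q0 qn x (k - 1)) (discreteTraj n q0 qn x k)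
            = 0 :=
  discrete_action_critical_iff_discreteEL_general L hL n q0 qn x
end

section
/- Let E be a finite-dimensional real normed vector space and let L : E × E → ℝ be twice continuously differentiable in a neighborhood of a point (a, b) ∈ E × E. Define the discrete Legendre transformations F⁻L, F⁺L : E × E → E × E* by F⁻L(q₀, q₁) = (q₀, −∂₀L(q₀, q₁)) and F⁺L(q₀, q₁) = (q₁, ∂₁L(q₀, q₁)). Then the Fréchet derivative of F⁻L at (a, b) is a linear isomorphism if and only if the Fréchet derivative of F⁺L at (a, b) is a linear isomorphism (hence F⁻L is a local diffeomorphism at (a, b) if and only if F⁺L is). -/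
/-- The discrete Legendre transformation
`F⁻L(q₀, q₁) = (q₀, −∂₀L(q₀, q₁)) ∈ E × E*`. -/
noncomputable def legendreMinus {E : Type*} [NormedAddCommGroup E] [NormedSpace ℝ E]
    (L : E × E → ℝ) : E × E → E × (E →L[ℝ] ℝ) :=
  fun p => (p.1, -partial0 L p.1 p.2)

/-- The discrete Legendre transformation
`F⁺L(q₀, q₁) = (q₁, ∂₁L(q₀, q₁)) ∈ E × E*`. -/
noncomputable def legendrePlus {E : Type*} [NormedAddCommGroup E] [NormedSpace ℝ E]
    (L : E × E → ℝ) : E × E → E × (E →L[ℝ] ℝ) :=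
  fun p => (p.2, partial1 L p.1 p.2)

/-!
Writing `D` for the second derivative of `L` at `(a, b)`, the derivatives of the two Legendre
transforms are block triangular up to a swap of the factors:
`DF⁻L(u, v) = (u, -D(u, v)(·, 0))` and `DF⁺L(u, v) = (v, D(u, v)(0, ·))`. Each is therefore
bijective iff its mixed block is: `v ↦ D(0, v)(·, 0)`, resp. `u ↦ D(u, 0)(0, ·)`. By symmetry
of `D` these two maps `E → E*` are transposes of each other, and in finite dimension a bilinear
form is nondegenerate in one slot iff it is in the other.
-/

open Function ContinuousLinearMap

theorem Function.bijective_prodMk_fst_add_iff {α β γ : Type*} [Nonempty α] [AddGroup γ]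
    (φ : α → γ) (ψ : β → γ) :
    Bijective (fun p : α × β => (p.1, φ p.1 + ψ p.2)) ↔ Bijective ψ := by
  obtain ⟨x₀⟩ := ‹Nonempty α›
  constructor
  · rintro ⟨hinj, hsurj⟩
    refine ⟨fun y y' h => ?_, fun z => ?_⟩
    · simpa using @hinj (x₀, y) (x₀, y') (by simp [h])
    · obtain ⟨⟨x, y⟩, hxy⟩ := hsurj (x₀, φ x₀ + z)
      simp only [Prod.mk.injEq] at hxy
      obtain ⟨rfl, hy⟩ := hxy
      exact ⟨y, add_left_cancel hy⟩
  · rintro ⟨hinj, hsurj⟩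
    refine ⟨fun ⟨x, y⟩ ⟨x', y'⟩ h => ?_, fun ⟨x, z⟩ => ?_⟩
    · simp only [Prod.mk.injEq] at h
      obtain ⟨rfl, hy⟩ := h
      rw [hinj (add_left_cancel hy)]
    · obtain ⟨y, hy⟩ := hsurj (-φ x + z)
      exact ⟨(x, y), by simp [hy]⟩

namespace ContinuousLinearMap

variable {R M N P : Type*} [Semiring R]
  [TopologicalSpace M] [AddCommMonoid M] [Module R M]
  [TopologicalSpace N] [AddCommMonoid N] [Module R N]
  [TopologicalSpace P] [AddCommGroup P] [Module R P]

theorem bijective_fst_prod_iff (T : M × N →L[R] P) :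
    Bijective ((fst R M N).prod T) ↔ Bijective (T ∘L inr R M N) := by
  have hshear : ⇑((fst R M N).prod T)
      = fun p => (p.1, (T ∘L inl R M N) p.1 + (T ∘L inr R M N) p.2) := by
    funext p
    rw [comp_inl_add_comp_inr, prod_apply, coe_fst']
  rw [hshear, bijective_prodMk_fst_add_iff]

theorem bijective_snd_prod_iff (T : M × N →L[R] P) :
    Bijective ((snd R M N).prod T) ↔ Bijective (T ∘L inl R M N) := by
  have hshear : ⇑((snd R M N).prod T)
      = (fun q => (q.1, (T ∘L inr R M N) q.1 + (T ∘L inl R M N) q.2)) ∘ Equiv.prodComm M N := by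
    funext p
    rw [Function.comp_apply, Equiv.prodComm_apply, Prod.fst_swap, Prod.snd_swap, add_comm,
      comp_inl_add_comp_inr, prod_apply, coe_snd']
  rw [hshear, Equiv.bijective_comp, bijective_prodMk_fst_add_iff]

theorem bijective_neg_iff {R M P : Type*} [Ring R] [TopologicalSpace M] [AddCommGroup M]
    [Module R M] [TopologicalSpace P] [AddCommGroup P] [Module R P] [IsTopologicalAddGroup P]
    (f : M →L[R] P) : Bijective ⇑(-f) ↔ Bijective f :=
  (Equiv.neg P).comp_bijective f

theorem bijective_flip_iff {𝕜 E F : Type*} [NontriviallyNormedField 𝕜] [CompleteSpace 𝕜]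
    [NormedAddCommGroup E] [NormedSpace 𝕜 E] [FiniteDimensional 𝕜 E]
    [NormedAddCommGroup F] [NormedSpace 𝕜 F] [FiniteDimensional 𝕜 F]
    (B : E →L[𝕜] F →L[𝕜] 𝕜) : Bijective B.flip ↔ Bijective B := by
  have hB : ⇑B = LinearMap.toContinuousLinearMap ∘ B.toLinearMap₁₂ := rfl
  have hB' : ⇑B.flip = LinearMap.toContinuousLinearMap ∘ B.toLinearMap₁₂.flip := rfl
  rw [hB, hB', EquivLike.comp_bijective, EquivLike.comp_bijective]
  exact LinearMap.flip_bijective_iff₁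

end ContinuousLinearMap

section Legendre

variable {E : Type*} [NormedAddCommGroup E] [NormedSpace ℝ E] {L : E × E → ℝ} {a b : E}
  {D : E × E →L[ℝ] E × E →L[ℝ] ℝ}

theorem hasFDerivAt_legendreMinus (hD : HasFDerivAt (fderiv ℝ L) D (a, b)) :
    HasFDerivAt (legendreMinus L) ((fst ℝ E E).prod (-(precomp ℝ (inl ℝ E E) ∘L D))) (a, b) :=
  hasFDerivAt_fst.prodMk ((precomp ℝ (inl ℝ E E)).hasFDerivAt.comp (a, b) hD).neg

theorem hasFDerivAt_legendrePlus (hD : HasFDerivAt (fderiv ℝ L) D (a, b)) :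
    HasFDerivAt (legendrePlus L) ((snd ℝ E E).prod (precomp ℝ (inr ℝ E E) ∘L D)) (a, b) :=
  hasFDerivAt_snd.prodMk ((precomp ℝ (inr ℝ E E)).hasFDerivAt.comp (a, b) hD :)

end Legendre

theorem IsSymmSndFDerivAt.precomp_inr_comp_inl_eq_flip {𝕜 E F : Type*}
    [NontriviallyNormedField 𝕜] [NormedAddCommGroup E] [NormedSpace 𝕜 E]
    [NormedAddCommGroup F] [NormedSpace 𝕜 F] {L : E × F → 𝕜} {p : E × F}
    (hL : IsSymmSndFDerivAt 𝕜 L p) :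
    (precomp 𝕜 (inr 𝕜 E F) ∘L fderiv 𝕜 (fderiv 𝕜 L) p) ∘L inl 𝕜 E F
      = ((precomp 𝕜 (inl 𝕜 E F) ∘L fderiv 𝕜 (fderiv 𝕜 L) p) ∘L inr 𝕜 E F).flip := by
  ext u w
  exact hL _ _

/-- For a `C²` discrete Lagrangian `L` near `(a, b)`, the Fréchet derivative of
`F⁻L` at `(a, b)` is a linear isomorphism iff that of `F⁺L` is; hence `F⁻L` is
a local diffeomorphism at `(a, b)` iff `F⁺L` is. -/
theorem legendreMinus_fderiv_bijective_iff_legendrePlus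
    {E : Type*} [NormedAddCommGroup E] [NormedSpace ℝ E] [FiniteDimensional ℝ E]
    (L : E × E → ℝ) (a b : E) (hL : ContDiffAt ℝ 2 L (a, b)) :
    Function.Bijective ⇑(fderiv ℝ (legendreMinus L) (a, b))
      ↔ Function.Bijective ⇑(fderiv ℝ (legendrePlus L) (a, b)) := by
  have hD : HasFDerivAt (fderiv ℝ L) (fderiv ℝ (fderiv ℝ L) (a, b)) (a, b) :=
    ((hL.fderiv_right le_rfl).differentiableAt one_ne_zero).hasFDerivAt
  rw [(hasFDerivAt_legendreMinus hD).fderiv, (hasFDerivAt_legendrePlus hD).fderiv,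
    bijective_fst_prod_iff, bijective_snd_prod_iff, neg_comp, bijective_neg_iff,
    (hL.isSymmSndFDerivAt (by simp)).precomp_inr_comp_inl_eq_flip, bijective_flip_iff]
end

section
/- Let E be a finite-dimensional real normed vector space, let L̂ : E × E → ℝ and φ¹, …, φᵐ : E × E → ℝ be functions, and fix q₀, q₂ ∈ E. Suppose q₁ ∈ E satisfies the constraints φᵃ(q₀, q₁) = 0 and φᵃ(q₁, q₂) = 0 for all a = 1, …, m; suppose L̂ and each φᵃ are strictly differentiable at (q₀, q₁) and at (q₁, q₂); suppose the linear map E → ℝ^{2m} given by v ↦ ((∂₁φᵃ(q₀, q₁)(v))_{a=1..m}, (∂₀φᵃ(q₁, q₂)(v))_{a=1..m}) is surjective; and suppose q₁ is a local extremum of the discrete action q ↦ L̂(q₀, q) + L̂(q, q₂) on the constraint set {q ∈ E : φᵃ(q₀, q) = 0 and φᵃ(q, q₂) = 0 for all a}. Then there exist Lagrange multipliers λ₁, λ₂ ∈ ℝ^m such that the discrete constrained Euler–Lagrange equation holds: for every v ∈ E, ∂₁L̂(q₀, q₁)(v) + Σ_a (λ₁)_a ∂₁φᵃ(q₀, q₁)(v)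 + ∂₀L̂(q₁, q₂)(v) + Σ_a (λ₂)_a ∂₀φᵃ(q₁, q₂)(v) = 0. -/
section PartialDerivatives

variable {E : Type*} [NormedAddCommGroup E] [NormedSpace ℝ E] {L : E × E → ℝ} {a b : E}

theorem hasStrictFDerivAt_partial0 (hL : HasStrictFDerivAt L (fderiv ℝ L (a, b)) (a, b)) :
    HasStrictFDerivAt (fun q => L (q, b)) (partial0 L a b) a :=
  hL.comp a ((hasStrictFDerivAt_id a).prodMk (hasStrictFDerivAt_const b a))

theorem hasStrictFDerivAt_partial1 (hL : HasStrictFDerivAt L (fderiv ℝ L (a, b)) (a, b)) :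
    HasStrictFDerivAt (fun q => L (a, q)) (partial1 L a b) b :=
  hL.comp b ((hasStrictFDerivAt_const a b).prodMk (hasStrictFDerivAt_id b))

end PartialDerivatives

theorem eq_zero_of_sum_smul_eq_zero_of_surjective {E ι : Type*} [TopologicalSpace E]
    [AddCommGroup E] [Module ℝ E] [Fintype ι] {f' : ι → StrongDual ℝ E}
    (hsurj : Function.Surjective fun v i => f' i v) {Λ : ι → ℝ}
    (hΛ : ∑ i, Λ i • f' i = 0) : Λ = 0 := by
  obtain ⟨v, hv⟩ := hsurj Λ
  have hv' : ∀ i, f' i v = Λ i := fun i => congrFun hv i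
  refine dotProduct_self_eq_zero.1 ?_
  simpa [dotProduct, hv'] using congr($hΛ v)

theorem IsLocalExtrOn.exists_multipliers_of_surjective {E ι : Type*} [NormedAddCommGroup E]
    [NormedSpace ℝ E] [CompleteSpace E] [Fintype ι] {f : ι → E → ℝ} {f' : ι → StrongDual ℝ E}
    {φ : E → ℝ} {φ' : StrongDual ℝ E} {x₀ : E}
    (hextr : IsLocalExtrOn φ {x | ∀ i, f i x = f i x₀} x₀)
    (hf' : ∀ i, HasStrictFDerivAt (f i) (f' i) x₀) (hφ' : HasStrictFDerivAt φ φ' x₀)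
    (hsurj : Function.Surjective fun v i => f' i v) :
    ∃ Λ : ι → ℝ, φ' + ∑ i, Λ i • f' i = 0 := by
  obtain ⟨Λ, Λ₀, hne, hsum⟩ := hextr.exists_multipliers_of_hasStrictFDerivAt hf' hφ'
  have hΛ₀ : Λ₀ ≠ 0 := by
    rintro rfl
    refine hne (Prod.ext (eq_zero_of_sum_smul_eq_zero_of_surjective hsurj ?_) rfl)
    simpa using hsum
  refine ⟨Λ₀⁻¹ • Λ, ?_⟩
  calc φ' + ∑ i, (Λ₀⁻¹ • Λ) i • f' i = Λ₀⁻¹ • ((∑ i, Λ i • f' i) + Λ₀ • φ') := by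
        rw [smul_add, smul_smul, inv_mul_cancel₀ hΛ₀, one_smul, Finset.smul_sum, add_comm]
        simp only [Pi.smul_apply, smul_smul, smul_eq_mul]
    _ = 0 := by rw [hsum, smul_zero]

/-- Discrete constrained Euler–Lagrange equations with Lagrange multipliers:
if `q₁` satisfies the constraints `φᵃ(q₀, q₁) = 0 = φᵃ(q₁, q₂)`, the data are
strictly differentiable at the relevant points, the combined constraint
derivative map `v ↦ ((∂₁φᵃ(q₀,q₁)v)ₐ, (∂₀φᵃ(q₁,q₂)v)ₐ)` is surjective, and
`q₁` is a local extremum of `q ↦ L̂(q₀, q) + L̂(q, q₂)` on the constraint set,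
then there exist multipliers `λ₁, λ₂ ∈ ℝᵐ` with
`∂₁L̂(q₀,q₁) + Σₐ (λ₁)ₐ ∂₁φᵃ(q₀,q₁) + ∂₀L̂(q₁,q₂) + Σₐ (λ₂)ₐ ∂₀φᵃ(q₁,q₂) = 0`. -/
theorem discrete_constrained_EL_lagrange_multipliers
    {E : Type*} [NormedAddCommGroup E] [NormedSpace ℝ E] [FiniteDimensional ℝ E]
    (m : ℕ) (Lhat : E × E → ℝ) (φ : Fin m → E × E → ℝ) (q0 q1 q2 : E)
    (hφ01 : ∀ a, φ a (q0, q1) = 0)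
    (hφ12 : ∀ a, φ a (q1, q2) = 0)
    (hL01 : HasStrictFDerivAt Lhat (fderiv ℝ Lhat (q0, q1)) (q0, q1))
    (hL12 : HasStrictFDerivAt Lhat (fderiv ℝ Lhat (q1, q2)) (q1, q2))
    (hφd01 : ∀ a, HasStrictFDerivAt (φ a) (fderiv ℝ (φ a) (q0, q1)) (q0, q1))
    (hφd12 : ∀ a, HasStrictFDerivAt (φ a) (fderiv ℝ (φ a) (q1, q2)) (q1, q2))
    (hsurj : Function.Surjective
      (fun v : E =>
        ((fun a => partial1 (φ a) q0 q1 v, fun a => partial0 (φ a) q1 q2 v) :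
          (Fin m → ℝ) × (Fin m → ℝ))))
    (hext : IsLocalExtrOn (fun q : E => Lhat (q0, q) + Lhat (q, q2))
      {q : E | (∀ a, φ a (q0, q) = 0) ∧ (∀ a, φ a (q, q2) = 0)} q1) :
    ∃ lam1 lam2 : Fin m → ℝ, ∀ v : E,
      partial1 Lhat q0 q1 v + (∑ a, lam1 a * partial1 (φ a) q0 q1 v)
        + partial0 Lhat q1 q2 v + (∑ a, lam2 a * partial0 (φ a) q1 q2 v) = 0 := by
  set g : Fin m ⊕ Fin m → E → ℝ := Sum.elim (fun a q => φ a (q0, q)) (fun a q => φ a (q, q2))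
  set g' : Fin m ⊕ Fin m → StrongDual ℝ E :=
    Sum.elim (fun a => partial1 (φ a) q0 q1) (fun a => partial0 (φ a) q1 q2)
  have hg' : ∀ i, HasStrictFDerivAt (g i) (g' i) q1 := by
    rintro (a | a)
    exacts [hasStrictFDerivAt_partial1 (hφd01 a), hasStrictFDerivAt_partial0 (hφd12 a)]
  have hconstr : {q : E | (∀ a, φ a (q0, q) = 0) ∧ (∀ a, φ a (q, q2) = 0)}
      = {q | ∀ i, g i q = g i q1} := by
    ext q
    simp [g, Sum.forall, hφ01, hφ12]
  have hsurj' : Function.Surjective fun v i => g' i v := by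
    convert (Equiv.sumArrowEquivProdArrow _ _ ℝ).symm.surjective.comp hsurj using 2 with v
    ext (a | a) <;> rfl
  obtain ⟨Λ, hΛ⟩ := (hconstr ▸ hext).exists_multipliers_of_surjective hg'
    ((hasStrictFDerivAt_partial1 hL01).add (hasStrictFDerivAt_partial0 hL12)) hsurj'
  refine ⟨Λ ∘ Sum.inl, Λ ∘ Sum.inr, fun v => ?_⟩
  have hΛv := congr($hΛ v)
  simp only [add_apply, sum_apply, smul_apply, zero_apply, smul_eq_mul, Fintype.sum_sum_type, g',
    Sum.elim_inl, Sum.elim_inr] at hΛv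
  simp only [Function.comp_apply]
  linarith
end
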